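/- arXiv:2103.14623 — 2 statements merged into one kernel-verified Lean document; each statement's English description precedes it below -/
import Mathlib

section
/- Let γ>0, χ>0, σ>0 with γ=σχ, and let H be the potential H(x) = −γx/3 for x ≥ 1/2, H(x) = −(γ/24)(3−4x+12x²) for 0 ≤ x ≤ 1/2, H(x) = −(γ/24)(3+4x+12x²) for −1/2 ≤ x ≤ 0, H(x) = γx/3 for x ≤ −1/2. Let η∈C₀^∞(ℝ) satisfy χ_{[−(1/2−1/1000),(1/2−1/1000)]} ≤ η ≤ χ_{[−1/2,1/2]}. Suppose f ≥ 0 is a measurable function with 0 ≤ f(x) ≤ σ·η(x) for all x and ∫_ℝ f(x)dx ≥ (3/4)·σ·∫_ℝ η(x)dx. Then for every x ≠ 0 (away from the points ±1/2 where one takes one-sided derivatives), sgn(x)·H'(x) ≥ sgn(x)·χ·(1/2)(∫_x^∞ f(y)dy − ∫_{−∞}^x f(y)dy); that is, the drift created by χ(−Δ)^{-1}f towards the origin is at least as strong as that of H. -/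
open MeasureTheory

/-- The "weakest" piecewise drift potential `H`. -/
noncomputable def Hpot (γ : ℝ) (x : ℝ) : ℝ :=
  if 1/2 ≤ x then -(γ * x / 3)
  else if 0 ≤ x then -(γ / 24) * (3 - 4 * x + 12 * x^2)
  else if -(1/2) ≤ x then -(γ / 24) * (3 + 4 * x + 12 * x^2)
  else γ * x / 3

lemma deriv_Hpot_right (γ x : ℝ) (hx : 1/2 < x) : deriv (Hpot γ) x = -(γ/3) := by
  have heq : Hpot γ =ᶠ[nhds x] fun y => -(γ * y / 3) := by
    filter_upwards [Ioi_mem_nhds hx] with y hy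
    simp only [Hpot, if_pos (le_of_lt (show (1/2:ℝ) < y from hy))]
  rw [heq.deriv_eq]
  have h : HasDerivAt (fun y : ℝ => -(γ * y / 3)) (-(γ/3)) x := by
    have := (((hasDerivAt_id x).const_mul γ).div_const 3).neg
    exact this.congr_deriv (by ring)
  exact h.deriv

lemma deriv_Hpot_left (γ x : ℝ) (hx : x < -(1/2)) : deriv (Hpot γ) x = γ/3 := by
  have heq : Hpot γ =ᶠ[nhds x] fun y => γ * y / 3 := by
    filter_upwards [Iio_mem_nhds hx] with y hy
    have hy' : y < -(1/2) := hy
    have h1 : ¬ (1/2 : ℝ) ≤ y := by linarith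
    have h2 : ¬ (0 : ℝ) ≤ y := by linarith
    have h3 : ¬ (-(1/2) : ℝ) ≤ y := by linarith
    simp only [Hpot, if_neg h1, if_neg h2, if_neg h3]
  rw [heq.deriv_eq]
  have h : HasDerivAt (fun y : ℝ => γ * y / 3) (γ/3) x := by
    have := ((hasDerivAt_id x).const_mul γ).div_const 3
    exact this.congr_deriv (by ring)
  exact h.deriv

lemma deriv_Hpot_midpos (γ x : ℝ) (h0 : 0 < x) (h1 : x < 1/2) :
    deriv (Hpot γ) x = γ * (1 - 6*x) / 6 := by
  have heq : Hpot γ =ᶠ[nhds x] fun y => -(γ/24) * (3 - 4*y + 12*y^2) := by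
    filter_upwards [Ioo_mem_nhds h0 h1] with y hy
    simp only [Hpot, if_neg (not_le.2 hy.2), if_pos hy.1.le]
  rw [heq.deriv_eq]
  have h : HasDerivAt (fun y : ℝ => -(γ/24) * (3 - 4*y + 12*y^2))
      (γ * (1 - 6*x) / 6) x := by
    have hp : HasDerivAt (fun y : ℝ => 3 - 4*y + 12*y^2) (-4 + 12*(2*x^1)) x := by
      exact ((((hasDerivAt_id x).const_mul 4).const_sub 3)).add
        ((hasDerivAt_pow 2 x).const_mul 12) |>.congr_deriv (by ring)
    have := hp.const_mul (-(γ/24))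
    exact this.congr_deriv (by ring)
  exact h.deriv

lemma deriv_Hpot_midneg (γ x : ℝ) (h0 : -(1/2) < x) (h1 : x < 0) :
    deriv (Hpot γ) x = -(γ * (1 + 6*x) / 6) := by
  have heq : Hpot γ =ᶠ[nhds x] fun y => -(γ/24) * (3 + 4*y + 12*y^2) := by
    filter_upwards [Ioo_mem_nhds h0 h1] with y hy
    have ha : ¬ (1/2 : ℝ) ≤ y := by have := hy.2; norm_num at this ⊢; linarith
    simp only [Hpot, if_neg ha, if_neg (not_le.2 hy.2), if_pos hy.1.le]
  rw [heq.deriv_eq]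
  have h : HasDerivAt (fun y : ℝ => -(γ/24) * (3 + 4*y + 12*y^2))
      (-(γ * (1 + 6*x) / 6)) x := by
    have hp : HasDerivAt (fun y : ℝ => 3 + 4*y + 12*y^2) (4 + 12*(2*x^1)) x := by
      exact (((hasDerivAt_id x).const_mul 4).const_add 3).add
        ((hasDerivAt_pow 2 x).const_mul 12) |>.congr_deriv (by ring)
    have := hp.const_mul (-(γ/24))
    exact this.congr_deriv (by ring)
  exact h.deriv

/-- any admissible remaining density `f` with at least `3/4` of the
mass of `ρ₂(·,0) = ση` creates, via `χ(−Δ)^{-1}f`, an attraction towards the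
origin at least as strong as the drift of the potential `H`. -/
theorem weakest_potential_comparison
    (γ χ σ : ℝ) (hγ : 0 < γ) (hχ : 0 < χ) (hσ : 0 < σ) (hγdef : γ = σ * χ)
    (η : ℝ → ℝ) (hη : ContDiff ℝ (⊤ : ℕ∞) η) (hηsupp : HasCompactSupport η)
    (hηlow : ∀ x : ℝ, Set.indicator (Set.Icc (-(1/2 - 1/1000)) (1/2 - 1/1000))
        (fun _ => (1:ℝ)) x ≤ η x)
    (hηhigh : ∀ x : ℝ, η x ≤ Set.indicator (Set.Icc (-(1/2) : ℝ) (1/2)) (fun _ => (1:ℝ)) x)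
    (f : ℝ → ℝ) (hmeas : Measurable f) (hint : Integrable f)
    (hf0 : ∀ x : ℝ, 0 ≤ f x) (hfle : ∀ x : ℝ, f x ≤ σ * η x)
    (hfmass : (3/4) * (σ * ∫ x : ℝ, η x) ≤ ∫ x : ℝ, f x) :
    ∀ x : ℝ, x ≠ 0 → x ≠ 1/2 → x ≠ -(1/2) →
      Real.sign x * (χ * ((1/2) * ((∫ y in Set.Ioi x, f y) - (∫ y in Set.Iio x, f y))))
        ≤ Real.sign x * deriv (Hpot γ) x := by
  -- f vanishes outside [-1/2, 1/2]
  have hfzero : ∀ y : ℝ, y ∉ Set.Icc (-(1/2) : ℝ) (1/2) → f y = 0 := by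
    intro y hy
    have h2 := hηhigh y
    rw [Set.indicator_of_notMem hy] at h2
    exact le_antisymm (by nlinarith [hfle y]) (hf0 y)
  -- f ≤ σ everywhere
  have hfσ : ∀ y : ℝ, f y ≤ σ := by
    intro y
    have h1 := hfle y
    have h2 := hηhigh y
    have : Set.indicator (Set.Icc (-(1/2) : ℝ) (1/2)) (fun _ => (1:ℝ)) y ≤ 1 := by
      by_cases hy : y ∈ Set.Icc (-(1/2) : ℝ) (1/2)
      · rw [Set.indicator_of_mem hy]
      · rw [Set.indicator_of_notMem hy]; norm_num
    nlinarith
  -- mass lower bound : 2σ ≤ 3M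
  set M := ∫ x : ℝ, f x with hMdef
  have hηint : Integrable η := hη.continuous.integrable_of_hasCompactSupport hηsupp
  have hM : 2 * σ ≤ 3 * M := by
    have hindint : Integrable (Set.indicator
        (Set.Icc (-(1/2 - 1/1000) : ℝ) (1/2 - 1/1000)) (fun _ => (1:ℝ))) := by
      rw [integrable_indicator_iff measurableSet_Icc]
      exact integrableOn_const (by simp [Real.volume_Icc])
    have hle : (499/500 : ℝ) ≤ ∫ x : ℝ, η x := by
      have := integral_mono hindint hηint hηlow
      rwa [integral_indicator measurableSet_Icc, setIntegral_const, smul_eq_mul,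
        mul_one, measureReal_def, Real.volume_Icc, show ((1:ℝ)/2 - 1/1000 - -(1/2 - 1/1000)) = 499/500 by norm_num,
        ENNReal.toReal_ofReal (by norm_num)] at this
    nlinarith
  -- total mass splitting
  have hsplit : ∀ x : ℝ, (∫ y in Set.Iio x, f y) + (∫ y in Set.Ioi x, f y) = M := by
    intro x
    rw [setIntegral_congr_set Iio_ae_eq_Iic]
    exact intervalIntegral.integral_Iic_add_Ioi hint.integrableOn hint.integrableOn
  have hAnonneg : ∀ x : ℝ, 0 ≤ ∫ y in Set.Ioi x, f y := fun x =>
    setIntegral_nonneg measurableSet_Ioi (fun y _ => hf0 y)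
  have hBnonneg : ∀ x : ℝ, 0 ≤ ∫ y in Set.Iio x, f y := fun x =>
    setIntegral_nonneg measurableSet_Iio (fun y _ => hf0 y)
  -- upper bound on right tail for 0 < x < 1/2
  have hA : ∀ x : ℝ, x ≤ 1/2 → (∫ y in Set.Ioi x, f y) ≤ σ * (1/2 - x) := by
    intro x hx
    have hdecomp : (Set.Ioc x (1/2) : Set ℝ) ∪ Set.Ioi (1/2) = Set.Ioi x :=
      Set.Ioc_union_Ioi_eq_Ioi hx
    have h2 : (∫ y in Set.Ioi ((1:ℝ)/2), f y) = 0 :=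
      setIntegral_eq_zero_of_forall_eq_zero fun y hy =>
        hfzero y (by simp only [Set.mem_Icc]; push_neg; intro _; exact hy)
    have h1 : (∫ y in Set.Ioi x, f y)
        = (∫ y in Set.Ioc x (1/2), f y) + ∫ y in Set.Ioi ((1:ℝ)/2), f y := by
      rw [← hdecomp, setIntegral_union (Set.Ioc_disjoint_Ioi le_rfl) measurableSet_Ioi
        hint.integrableOn hint.integrableOn]
    have h3 : (∫ y in Set.Ioc x (1/2), f y) ≤ ∫ y in Set.Ioc x ((1:ℝ)/2), σ :=
      setIntegral_mono_on hint.integrableOn (integrableOn_const (by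
        simp [Real.volume_Ioc])) measurableSet_Ioc
        (fun y _ => hfσ y)
    have h4 : (∫ y in Set.Ioc x ((1:ℝ)/2), (σ:ℝ)) = σ * (1/2 - x) := by
      rw [setIntegral_const, measureReal_def, Real.volume_Ioc, smul_eq_mul,
        ENNReal.toReal_ofReal (by linarith)]
      ring
    rw [h1, h2, add_zero]
    exact h3.trans_eq h4
  -- upper bound on left tail for -1/2 < x < 0
  have hB : ∀ x : ℝ, -(1/2) ≤ x → (∫ y in Set.Iio x, f y) ≤ σ * (x + 1/2) := by
    intro x hx
    have hdecomp : (Set.Iio (-(1/2)) : Set ℝ) ∪ Set.Ico (-(1/2)) x = Set.Iio x :=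
      Set.Iio_union_Ico_eq_Iio hx
    have h2 : (∫ y in Set.Iio (-(1/2) : ℝ), f y) = 0 :=
      setIntegral_eq_zero_of_forall_eq_zero fun y hy => by
        have hy' : y < -(1/2) := hy
        exact hfzero y (by simp only [Set.mem_Icc]; push_neg; intro h; linarith)
    have h1 : (∫ y in Set.Iio x, f y)
        = (∫ y in Set.Iio (-(1/2) : ℝ), f y) + ∫ y in Set.Ico (-(1/2) : ℝ) x, f y := by
      have hdisj : Disjoint (Set.Iio (-(1/2):ℝ)) (Set.Ico (-(1/2):ℝ) x) :=
        Set.disjoint_left.2 fun y hy1 hy2 => absurd hy2.1 (not_le.2 hy1)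
      rw [← hdecomp]
      exact setIntegral_union hdisj measurableSet_Ico hint.integrableOn hint.integrableOn
    have h3 : (∫ y in Set.Ico (-(1/2) : ℝ) x, f y) ≤ ∫ y in Set.Ico (-(1/2) : ℝ) x, σ :=
      setIntegral_mono_on hint.integrableOn (integrableOn_const (by
        simp [Real.volume_Ico])) measurableSet_Ico
        (fun y _ => hfσ y)
    have h4 : (∫ y in Set.Ico (-(1/2) : ℝ) x, (σ:ℝ)) = σ * (x + 1/2) := by
      rw [setIntegral_const, measureReal_def, Real.volume_Ico, smul_eq_mul,
        ENNReal.toReal_ofReal (by linarith)]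
      ring
    rw [h1, h2, zero_add]
    exact h3.trans_eq h4
  intro x hx0 hx12 hxm12
  rcases lt_trichotomy x 0 with hneg | hzero | hpos
  · -- x < 0
    rw [Real.sign_of_neg hneg]
    rcases lt_or_gt_of_ne hxm12 with hlt | hgt
    · -- x < -1/2
      rw [deriv_Hpot_left γ x hlt]
      have hB0 : (∫ y in Set.Iio x, f y) = 0 :=
        setIntegral_eq_zero_of_forall_eq_zero fun y hy => by
          have hy' : y < x := hy
          exact hfzero y (by simp only [Set.mem_Icc]; push_neg; intro h; linarith)
      have hA0 : (∫ y in Set.Ioi x, f y) = M := by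
        have := hsplit x; rw [hB0, zero_add] at this; exact this
      rw [hA0, hB0]
      nlinarith
    · -- -1/2 < x < 0
      rw [deriv_Hpot_midneg γ x hgt hneg]
      have hBx := hB x hgt.le
      have hAx : (∫ y in Set.Ioi x, f y) = M - ∫ y in Set.Iio x, f y := by
        have := hsplit x; linarith
      rw [hAx]
      nlinarith [hBnonneg x]
  · exact absurd hzero hx0
  · -- x > 0
    rw [Real.sign_of_pos hpos]
    rcases lt_or_gt_of_ne hx12 with hlt | hgt
    · -- 0 < x < 1/2
      rw [deriv_Hpot_midpos γ x hpos hlt]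
      have hAx := hA x hlt.le
      have hBx : (∫ y in Set.Iio x, f y) = M - ∫ y in Set.Ioi x, f y := by
        have := hsplit x; linarith
      rw [hBx]
      nlinarith [hAnonneg x]
    · -- x > 1/2
      rw [deriv_Hpot_right γ x hgt]
      have hA0 : (∫ y in Set.Ioi x, f y) = 0 :=
        setIntegral_eq_zero_of_forall_eq_zero fun y hy => by
          have hy' : x < y := hy
          exact hfzero y (by simp only [Set.mem_Icc]; push_neg; intro _; linarith)
      have hB0 : (∫ y in Set.Iio x, f y) = M := by
        have := hsplit x; rw [hA0, add_zero] at this; exact this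
      rw [hA0, hB0]
      nlinarith
end

section
/- Let H(x) = −γx/3 for x ≥ 1/2, H(x) = −(γ/24)(3−4x+12x²) for 0 ≤ x ≤ 1/2, H(x) = −(γ/24)(3+4x+12x²) for −1/2 ≤ x ≤ 0, H(x) = γx/3 for x ≤ −1/2. There exists γ₀ > 0 such that for all γ ≥ γ₀ the following holds. Suppose f : ℝ×[0,∞) → [0,1] is such that for each t ≥ 0 the function f(·,t) is even and nonincreasing in |x|, the weighted integral ∫_ℝ f(x,t)e^{H(x)}dx is independent of t, and f(x,0) ≥ 1 for |x| ≤ 13/60. Then f(x,t) ≥ 1/2 for all t ≥ 0 and all |x| ≤ 11/60. -/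
open MeasureTheory

/-! If `f(x₀, t) < 1/2` for some `|x₀| ≤ 11/60`, monotonicity in `|x|` gives `f(·, t) ≤ 1/2` on
`|x| ≥ 11/60`. Comparing with the initial mass, which is at least the weight of `[-13/60, 13/60]`,
the weight of `11/60 ≤ |x| ≤ 13/60` is then at most that of `|x| > 13/60`. For the weight `e^H`
this fails once `γ > 600`: `H` decreases beyond `1/6` and lies below its tangent of slope `-γ/20`
at `13/60`, so the tail carries at most `(20/γ) e^{H(13/60)}`, while `[11/60, 13/60]` carries at
least `(1/30) e^{H(13/60)}`. -/

open Set Real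

section MassTrapping

variable {w f₀ f : ℝ → ℝ} {a b : ℝ}

theorem setIntegral_abs_preimage (hw : ∀ x, w (-x) = w x) {s : Set ℝ} (hs : MeasurableSet s)
    (hs₀ : s ⊆ Ioi 0) : ∫ x in abs ⁻¹' s, w x = 2 * ∫ x in s, w x := by
  have hw_abs : ∀ x, w |x| = w x := fun x => by
    rcases abs_choice x with h | h <;> rw [h]
    exact hw x
  have hind : (abs ⁻¹' s).indicator w = fun x => s.indicator w |x| := by
    funext x
    rw [← indicator_comp_right, show w ∘ abs = w from funext hw_abs]
  rw [← integral_indicator (measurable_abs hs), hind, integral_comp_abs,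
    setIntegral_indicator hs, inter_eq_right.mpr hs₀]

theorem setIntegral_annulus_le_of_mass_le (hab : a ≤ b) (hw : Integrable w) (hw₀ : ∀ x, 0 ≤ w x)
    (hf₀ : Integrable fun x => f₀ x * w x) (hf : Integrable fun x => f x * w x)
    (hmass : ∫ x, f₀ x * w x ≤ ∫ x, f x * w x) (hf₀_nonneg : ∀ x, 0 ≤ f₀ x)
    (hf₀_one : ∀ x, |x| ≤ b → 1 ≤ f₀ x) (hf_one : ∀ x, f x ≤ 1)
    (hf_half : ∀ x, a ≤ |x| → f x ≤ 1 / 2) :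
    ∫ x in abs ⁻¹' Icc a b, w x ≤ ∫ x in abs ⁻¹' Ioi b, w x := by
  have hA : MeasurableSet (abs ⁻¹' Icc a b : Set ℝ) := measurable_abs measurableSet_Icc
  have hB : MeasurableSet (abs ⁻¹' Ioi b : Set ℝ) := measurable_abs measurableSet_Ioi
  have hpt : ∀ x, f x * w x + (abs ⁻¹' Icc a b).indicator w x / 2
      ≤ f₀ x * w x + (abs ⁻¹' Ioi b).indicator w x / 2 := by
    intro x
    have hwx := hw₀ x
    by_cases hxb : |x| ≤ b
    · have h₀ := mul_le_mul_of_nonneg_right (hf₀_one x hxb) hwx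
      rw [indicator_of_notMem (show x ∉ abs ⁻¹' Ioi b from not_lt.mpr hxb)]
      by_cases hxa : a ≤ |x|
      · have h := mul_le_mul_of_nonneg_right (hf_half x hxa) hwx
        rw [indicator_of_mem (show x ∈ abs ⁻¹' Icc a b from ⟨hxa, hxb⟩)]
        linarith
      · have h := mul_le_mul_of_nonneg_right (hf_one x) hwx
        rw [indicator_of_notMem (show x ∉ abs ⁻¹' Icc a b from fun h => hxa h.1)]
        linarith
    · have h₀ := mul_nonneg (hf₀_nonneg x) hwx
      have h := mul_le_mul_of_nonneg_right (hf_half x (hab.trans (le_of_not_ge hxb))) hwx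
      rw [indicator_of_notMem (show x ∉ abs ⁻¹' Icc a b from fun h => hxb h.2),
        indicator_of_mem (show x ∈ abs ⁻¹' Ioi b from lt_of_not_ge hxb)]
      linarith
  have hint : ∫ x, (f x * w x + (abs ⁻¹' Icc a b).indicator w x / 2)
      ≤ ∫ x, (f₀ x * w x + (abs ⁻¹' Ioi b).indicator w x / 2) :=
    integral_mono (hf.add ((hw.indicator hA).div_const 2))
      (hf₀.add ((hw.indicator hB).div_const 2)) hpt
  rw [integral_add hf ((hw.indicator hA).div_const 2),
    integral_add hf₀ ((hw.indicator hB).div_const 2), integral_div, integral_div,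
    integral_indicator hA, integral_indicator hB] at hint
  linarith

theorem half_le_of_mass_le (ha : 0 < a) (hab : a ≤ b) (hw : Integrable w) (hw₀ : ∀ x, 0 ≤ w x)
    (hw_even : ∀ x, w (-x) = w x)
    (hf₀ : Integrable fun x => f₀ x * w x) (hf : Integrable fun x => f x * w x)
    (hmass : ∫ x, f₀ x * w x ≤ ∫ x, f x * w x) (hf₀_nonneg : ∀ x, 0 ≤ f₀ x)
    (hf₀_one : ∀ x, |x| ≤ b → 1 ≤ f₀ x) (hf_one : ∀ x, f x ≤ 1)
    (hf_anti : ∀ x y, |x| ≤ |y| → f y ≤ f x)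
    (hgap : ∫ x in Ioi b, w x < ∫ x in Icc a b, w x) {x : ℝ} (hx : |x| ≤ a) :
    1 / 2 ≤ f x := by
  by_contra! hlt
  have hf_half : ∀ y, a ≤ |y| → f y ≤ 1 / 2 :=
    fun y hy => (hf_anti x y (hx.trans hy)).trans hlt.le
  have h := setIntegral_annulus_le_of_mass_le hab hw hw₀ hf₀ hf hmass hf₀_nonneg hf₀_one hf_one
    hf_half
  rw [setIntegral_abs_preimage hw_even measurableSet_Icc fun y hy => ha.trans_le hy.1,
    setIntegral_abs_preimage hw_even measurableSet_Ioi fun y hy => (ha.trans_le hab).trans hy] at h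
  linarith

end MassTrapping

section ExpIntegrals

variable {φ : ℝ → ℝ} {c k : ℝ}

theorem integrable_exp_of_le_sub_mul_abs (hφ : Measurable φ) (hk : 0 < k)
    (h : ∀ x, φ x ≤ c - k * |x|) : Integrable fun x => exp (φ x) := by
  have hle : ∀ x, ‖exp (φ x)‖ ≤ exp c * exp (-k * |x|) := fun x => by
    rw [norm_of_nonneg (exp_pos _).le, ← exp_add]
    exact exp_le_exp.2 (by linarith [h x])
  have hIic : IntegrableOn (fun x => exp (φ x)) (Iic 0) :=
    ((integrableOn_exp_mul_Iic hk 0).const_mul (exp c)).mono' hφ.exp.aestronglyMeasurable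
      ((ae_restrict_mem measurableSet_Iic).mono fun x (hx : x ≤ 0) => by
        simpa [abs_of_nonpos hx] using hle x)
  have hIoi : IntegrableOn (fun x => exp (φ x)) (Ioi 0) :=
    ((integrableOn_exp_mul_Ioi (neg_neg_of_pos hk) 0).const_mul (exp c)).mono'
      hφ.exp.aestronglyMeasurable
      ((ae_restrict_mem measurableSet_Ioi).mono fun x (hx : 0 < x) => by
        simpa [abs_of_pos hx] using hle x)
  simpa only [Iic_union_Ioi, integrableOn_univ] using hIic.union hIoi

theorem setIntegral_Ioi_exp_le {b : ℝ} (hk : 0 < k) (h : ∀ x, b < x → φ x ≤ φ b - k * (x - b)) :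
    ∫ x in Ioi b, exp (φ x) ≤ exp (φ b) / k := by
  calc ∫ x in Ioi b, exp (φ x) ≤ ∫ x in Ioi b, exp (φ b + k * b) * exp (-k * x) := by
        refine integral_mono_of_nonneg (.of_forall fun x => (exp_pos _).le)
          ((integrableOn_exp_mul_Ioi (neg_neg_of_pos hk) b).const_mul _)
          ((ae_restrict_mem measurableSet_Ioi).mono fun x (hx : b < x) => ?_)
        simp only [← exp_add, exp_le_exp]
        linarith [h x hx]
    _ = exp (φ b) / k := by
        rw [integral_const_mul, integral_exp_mul_Ioi (neg_neg_of_pos hk), neg_div_neg_eq,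
          ← mul_div_assoc, ← exp_add]
        ring_nf

end ExpIntegrals

section Hpot

variable {γ x : ℝ}

theorem Hpot_of_half_le (hx : 1 / 2 ≤ x) : Hpot γ x = -(γ * x / 3) := if_pos hx

theorem Hpot_of_nonneg_of_lt_half (hx₀ : 0 ≤ x) (hx : x < 1 / 2) :
    Hpot γ x = -(γ / 24) * (3 - 4 * x + 12 * x ^ 2) := by
  rw [Hpot, if_neg (not_le.mpr hx), if_pos hx₀]

theorem Hpot_neg (γ x : ℝ) : Hpot γ (-x) = Hpot γ x := by
  unfold Hpot
  split_ifs <;>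
    first
      | ring1
      | (exfalso; linarith)
      | (obtain rfl : x = 0 := by linarith
         ring1)
      | (obtain rfl : x = 1 / 2 := by linarith
         ring1)
      | (obtain rfl : x = -(1 / 2) := by linarith
         ring1)

theorem Hpot_abs (γ x : ℝ) : Hpot γ |x| = Hpot γ x := by
  rcases abs_choice x with h | h <;> rw [h]
  exact Hpot_neg γ x

theorem measurable_Hpot (γ : ℝ) : Measurable (Hpot γ) := by
  refine Measurable.ite (measurableSet_le measurable_const measurable_id) (by fun_prop) ?_
  refine Measurable.ite (measurableSet_le measurable_const measurable_id) (by fun_prop) ?_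
  exact Measurable.ite (measurableSet_le measurable_const measurable_id) (by fun_prop) (by fun_prop)

theorem Hpot_le_sub_mul_abs (hγ : 0 ≤ γ) (x : ℝ) : Hpot γ x ≤ γ / 6 - γ / 3 * |x| := by
  rw [← Hpot_abs]
  rcases le_or_gt (1 / 2) |x| with hx | hx
  · rw [Hpot_of_half_le hx]
    linarith
  · rw [Hpot_of_nonneg_of_lt_half (abs_nonneg x) hx]
    nlinarith [mul_nonneg hγ (sq_nonneg (|x| - 1 / 2))]

theorem antitoneOn_Hpot (hγ : 0 ≤ γ) : AntitoneOn (Hpot γ) (Ici (1 / 6)) := by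
  intro x (hx : 1 / 6 ≤ x) y (hy : 1 / 6 ≤ y) hxy
  rcases le_or_gt (1 / 2) x with hx' | hx'
  · rw [Hpot_of_half_le hx', Hpot_of_half_le (hx'.trans hxy)]
    nlinarith
  rw [Hpot_of_nonneg_of_lt_half (by linarith) hx']
  rcases le_or_gt (1 / 2) y with hy' | hy'
  · rw [Hpot_of_half_le hy']
    nlinarith [mul_nonneg hγ
      (mul_nonneg (sub_nonneg.2 hx'.le) (by linarith : (0 : ℝ) ≤ x - 1 / 6))]
  · rw [Hpot_of_nonneg_of_lt_half (by linarith) hy']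
    nlinarith [mul_nonneg hγ
      (mul_nonneg (sub_nonneg.2 hxy) (by linarith : (0 : ℝ) ≤ x + y - 1 / 3))]

/-- The quadratic piece is concave, so it lies below its tangent at `b`; the linear piece beyond
`1/2` is steeper than that tangent as long as `b ≤ 1/2`. -/
theorem Hpot_le_tangent (hγ : 0 ≤ γ) {b : ℝ} (hb₀ : 1 / 6 ≤ b) (hb : b < 1 / 2) (hbx : b ≤ x) :
    Hpot γ x ≤ Hpot γ b - γ * (b - 1 / 6) * (x - b) := by
  rw [Hpot_of_nonneg_of_lt_half (by linarith) hb]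
  rcases le_or_gt (1 / 2) x with hx | hx
  · rw [Hpot_of_half_le hx]
    nlinarith [mul_nonneg hγ (mul_nonneg (by linarith : (0 : ℝ) ≤ 1 / 2 - b)
      (by linarith : (0 : ℝ) ≤ x - 1 / 2)), mul_nonneg hγ (sq_nonneg (1 / 2 - b))]
  · rw [Hpot_of_nonneg_of_lt_half (by linarith) hx]
    nlinarith [mul_nonneg hγ (sq_nonneg (x - b))]

theorem integrable_exp_Hpot (hγ : 0 < γ) : Integrable fun x => exp (Hpot γ x) :=
  integrable_exp_of_le_sub_mul_abs (measurable_Hpot γ) (by linarith : 0 < γ / 3)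
    (Hpot_le_sub_mul_abs hγ.le)

end Hpot

theorem setIntegral_Ioi_exp_Hpot_lt {γ : ℝ} (hγ : 600 < γ) :
    ∫ x in Ioi (13 / 60), exp (Hpot γ x) < ∫ x in Icc (11 / 60) (13 / 60), exp (Hpot γ x) := by
  have hγ₀ : 0 ≤ γ := by linarith
  have hk : 0 < γ / 20 := by linarith
  have hpeak := exp_pos (Hpot γ (13 / 60))
  calc ∫ x in Ioi (13 / 60), exp (Hpot γ x) ≤ exp (Hpot γ (13 / 60)) / (γ / 20) :=
        setIntegral_Ioi_exp_le hk fun x hx => by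
          linarith [Hpot_le_tangent hγ₀ (b := 13 / 60) (by norm_num) (by norm_num) hx.le]
    _ < exp (Hpot γ (13 / 60)) * volume.real (Icc (11 / 60 : ℝ) (13 / 60)) := by
        rw [volume_real_Icc_of_le (by norm_num), div_lt_iff₀ hk]
        nlinarith
    _ ≤ ∫ x in Icc (11 / 60) (13 / 60), exp (Hpot γ x) :=
        setIntegral_ge_of_const_le_real measurableSet_Icc measure_Icc_lt_top.ne
          (fun x hx => exp_le_exp.2 <| antitoneOn_Hpot hγ₀
            (show (1 / 6 : ℝ) ≤ x by linarith [hx.1]) (show (1 / 6 : ℝ) ≤ 13 / 60 by norm_num) hx.2)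
          (integrable_exp_Hpot (by linarith)).integrableOn

/-- the mass-trapping estimate: conservation of `∫ f e^H dx`
forces `f ≥ 1/2` on `[-11/60, 11/60]` for all times, for large `γ`. -/
theorem mass_trapping :
    ∃ γ₀ : ℝ, 0 < γ₀ ∧
      ∀ (γ : ℝ), γ₀ ≤ γ →
      ∀ f : ℝ → ℝ → ℝ,
        -- f takes values in [0,1]
        (∀ x t : ℝ, 0 ≤ t → 0 ≤ f x t ∧ f x t ≤ 1) →
        -- f(·,t) is even and nonincreasing in |x|
        (∀ x t : ℝ, 0 ≤ t → f (-x) t = f x t) →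
        (∀ x y t : ℝ, 0 ≤ t → |x| ≤ |y| → f y t ≤ f x t) →
        -- the weighted integral ∫ f(x,t)e^{H(x)}dx is independent of t
        (∀ t : ℝ, 0 ≤ t → Integrable (fun x => f x t * Real.exp (Hpot γ x))) →
        (∀ t : ℝ, 0 ≤ t →
          (∫ x : ℝ, f x t * Real.exp (Hpot γ x)) =
            ∫ x : ℝ, f x 0 * Real.exp (Hpot γ x)) →
        -- initial lower bound
        (∀ x : ℝ, |x| ≤ 13/60 → 1 ≤ f x 0) →
        -- conclusion
        ∀ t x : ℝ, 0 ≤ t → |x| ≤ 11/60 → 1/2 ≤ f x t := by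
  refine ⟨601, by norm_num, fun γ hγ f hf_range _ hf_anti hf_int hf_mass hf_init t x ht hx => ?_⟩
  exact half_le_of_mass_le (by norm_num) (by norm_num) (integrable_exp_Hpot (by linarith))
    (fun x => (exp_pos _).le) (fun x => congrArg exp (Hpot_neg γ x)) (hf_int 0 le_rfl)
    (hf_int t ht) (hf_mass t ht).ge (fun x => (hf_range x 0 le_rfl).1) hf_init
    (fun x => (hf_range x t ht).2) (fun x y => hf_anti x y t ht)
    (setIntegral_Ioi_exp_Hpot_lt (by linarith)) hx
end
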